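/- arXiv:2001.01268 — 5 statements merged into one kernel-verified Lean document; each statement's English description precedes it below -/
import Mathlib

section
/- Let Q be a symmetric positive semidefinite n×n real matrix, u ∈ ℝⁿ, and f(x) = (1/2)xᵀQx − uᵀx. Suppose x̄ satisfies Qx̄ = u, and let λ_M be the minimal positive eigenvalue of Q (assume Q ≠ 0). Then for all x ∈ ℝⁿ, f(x) − f(x̄) ≤ (1/(2λ_M)) ‖Qx − u‖². -/
open scoped RealInnerProductSpace

theorem stmt_0 {n : ℕ}
    (Q : EuclideanSpace ℝ (Fin n) →L[ℝ] EuclideanSpace ℝ (Fin n))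
    (hsym : IsSelfAdjoint Q)
    (hpsd : ∀ x, 0 ≤ ⟪Q x, x⟫)
    (hQ0 : Q ≠ 0)
    (u : EuclideanSpace ℝ (Fin n))
    (f : EuclideanSpace ℝ (Fin n) → ℝ)
    (hf : ∀ x, f x = (1/2) * ⟪Q x, x⟫ - ⟪u, x⟫)
    (xbar : EuclideanSpace ℝ (Fin n)) (hxbar : Q xbar = u)
    (lamM : ℝ) (hlam_pos : 0 < lamM)
    (hlam_eig : Module.End.HasEigenvalue
      (Q : EuclideanSpace ℝ (Fin n) →ₗ[ℝ] EuclideanSpace ℝ (Fin n)) lamM)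
    (hlam_min : ∀ μ : ℝ, 0 < μ →
      Module.End.HasEigenvalue
        (Q : EuclideanSpace ℝ (Fin n) →ₗ[ℝ] EuclideanSpace ℝ (Fin n)) μ → lamM ≤ μ) :
    ∀ x, f x - f xbar ≤ (1 / (2 * lamM)) * ‖Q x - u‖ ^ 2 := by
  have hT : LinearMap.IsSymmetric
      (Q : EuclideanSpace ℝ (Fin n) →ₗ[ℝ] EuclideanSpace ℝ (Fin n)) := hsym.isSymmetric
  have hn : Module.finrank ℝ (EuclideanSpace ℝ (Fin n)) = n := finrank_euclideanSpace_fin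
  set b := hT.eigenvectorBasis hn with hb
  set μ := hT.eigenvalues hn with hμ
  -- each eigenvalue is nonneg
  have hμ0 : ∀ i, 0 ≤ μ i := by
    intro i
    have h := hpsd (b i)
    have happ : Q (b i) = μ i • b i := hT.apply_eigenvectorBasis hn i
    have hnorm : ⟪b i, b i⟫ = 1 := by
      have h1 := b.orthonormal.1 i
      rw [real_inner_self_eq_norm_sq, h1, one_pow]
    rw [happ, real_inner_smul_left, hnorm] at h
    linarith
  have hμkey : ∀ i, lamM * μ i ≤ μ i * μ i := by
    intro i
    rcases lt_or_eq_of_le (hμ0 i) with h | h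
    · have := hlam_min (μ i) h (hT.hasEigenvalue_eigenvalues hn i)
      nlinarith
    · nlinarith
  -- key inequality
  have key : ∀ y : EuclideanSpace ℝ (Fin n), lamM * ⟪Q y, y⟫ ≤ ‖Q y‖ ^ 2 := by
    intro y
    have hQb : ∀ i, ⟪Q y, b i⟫ = μ i * ⟪y, b i⟫ := by
      intro i
      have := hT (b i) y
      have happ : Q (b i) = μ i • b i := hT.apply_eigenvectorBasis hn i
      calc ⟪Q y, b i⟫ = ⟪y, Q (b i)⟫ := hT y (b i)
        _ = μ i * ⟪y, b i⟫ := by rw [happ, real_inner_smul_right]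
    have h1 : ⟪Q y, y⟫ = ∑ i, μ i * (⟪y, b i⟫ * ⟪y, b i⟫) := by
      rw [← b.sum_inner_mul_inner (Q y) y]
      apply Finset.sum_congr rfl
      intro i _
      rw [hQb i, real_inner_comm (b i) y]; ring
    have h2 : ‖Q y‖ ^ 2 = ∑ i, μ i * μ i * (⟪y, b i⟫ * ⟪y, b i⟫) := by
      rw [← real_inner_self_eq_norm_sq, ← b.sum_inner_mul_inner (Q y) (Q y)]
      apply Finset.sum_congr rfl
      intro i _
      have hc : ⟪b i, Q y⟫ = μ i * ⟪y, b i⟫ := by rw [real_inner_comm]; exact hQb i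
      rw [hQb i, hc]; ring
    rw [h1, h2, Finset.mul_sum]
    apply Finset.sum_le_sum
    intro i _
    have hsq : 0 ≤ ⟪y, b i⟫ * ⟪y, b i⟫ := mul_self_nonneg _
    nlinarith [hμkey i]
  intro x
  set y := x - xbar with hy
  have hQy : Q x - u = Q y := by rw [hy, map_sub, hxbar]
  have hdiff : f x - f xbar = (1/2) * ⟪Q y, y⟫ := by
    rw [hf x, hf xbar, hy]
    have e1 : Q (x - xbar) = Q x - Q xbar := map_sub Q x xbar
    rw [e1]
    rw [inner_sub_left, inner_sub_right, inner_sub_right]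
    have e2 : ⟪Q x, xbar⟫ = ⟪Q xbar, x⟫ := by
      rw [real_inner_comm]; exact (hT xbar x).symm
    have e3 : ⟪u, x⟫ = ⟪Q xbar, x⟫ := by rw [hxbar]
    have e4 : ⟪u, xbar⟫ = ⟪Q xbar, xbar⟫ := by rw [hxbar]
    rw [e2, e3, e4]; ring
  rw [hdiff, hQy]
  have hk := key y
  rw [div_mul_eq_mul_div, one_mul, mul_comm, mul_one_div,
    div_le_div_iff₀ (by norm_num) (by linarith)]
  nlinarith
end

section
/- Let Q be a symmetric positive semidefinite n×n real matrix with Q ≠ 0, u ∈ ℝⁿ, f(x) = (1/2)xᵀQx − uᵀx, and x̄ ∈ ℝⁿ with ‖Qx̄ − u‖ = δ₀ > 0. Let λ_M be the minimal positive eigenvalue of Q. Then there exists ε > 0 (e.g. ε = min(δ₀/‖Q‖, (δ₀/‖Q‖)(√(‖Q‖/(2λ_M) + 1) − 1))) such that for all x with ‖x − x̄‖ ≤ ε, |f(x) − f(x̄)| ≤ (1/(2λ_M)) ‖Qx − u‖². -/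
/-!
Both sides of the inequality are continuous in `x`. At `x̄` the left-hand side vanishes while the
right-hand side equals `δ₀² / (2 λ_M) > 0`, because `x̄` is not stationary; hence the inequality
holds on a closed ball around `x̄`.
-/

open Filter Topology
open scoped RealInnerProductSpace

theorem exists_closedBall_abs_sub_le {X : Type*} [PseudoMetricSpace X] {f g : X → ℝ} {a : X}
    (hf : ContinuousAt f a) (hg : ContinuousAt g a) (ha : 0 < g a) :
    ∃ ε > 0, ∀ x, dist x a ≤ ε → |f x - f a| ≤ g x := by
  have hlhs : Tendsto (fun x => |f x - f a|) (𝓝 a) (𝓝 0) := by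
    simpa using ((hf.sub continuousAt_const).abs : ContinuousAt (fun x => |f x - f a|) a).tendsto
  have hlt : ∀ᶠ x in 𝓝 a, |f x - f a| < g x := hlhs.eventually_lt hg ha
  obtain ⟨ε, hε, hball⟩ := Metric.nhds_basis_closedBall.eventually_iff.mp hlt
  exact ⟨ε, hε, fun x hx => (hball (Metric.mem_closedBall.mpr hx)).le⟩

theorem stmt_1_general {n : ℕ}
    (Q : EuclideanSpace ℝ (Fin n) →L[ℝ] EuclideanSpace ℝ (Fin n))
    (u : EuclideanSpace ℝ (Fin n))
    (f : EuclideanSpace ℝ (Fin n) → ℝ)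
    (hf : ∀ x, f x = (1/2) * ⟪Q x, x⟫ - ⟪u, x⟫)
    (xbar : EuclideanSpace ℝ (Fin n)) (δ₀ : ℝ)
    (hδ₀ : ‖Q xbar - u‖ = δ₀) (hδ₀pos : 0 < δ₀)
    (lamM : ℝ) (hlam_pos : 0 < lamM) :
    ∃ ε > 0, ∀ x, ‖x - xbar‖ ≤ ε →
      |f x - f xbar| ≤ (1 / (2 * lamM)) * ‖Q x - u‖ ^ 2 := by
  have hf_cont : Continuous f := by
    rw [funext hf]
    fun_prop
  have hrhs_pos : 0 < 1 / (2 * lamM) * ‖Q xbar - u‖ ^ 2 := by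
    rw [hδ₀]
    positivity
  obtain ⟨ε, hε, hball⟩ := exists_closedBall_abs_sub_le hf_cont.continuousAt
    (by fun_prop : Continuous fun x => 1 / (2 * lamM) * ‖Q x - u‖ ^ 2).continuousAt hrhs_pos
  exact ⟨ε, hε, fun x hx => hball x (by rwa [dist_eq_norm])⟩

theorem stmt_1 {n : ℕ}
    (Q : EuclideanSpace ℝ (Fin n) →L[ℝ] EuclideanSpace ℝ (Fin n))
    (hsym : IsSelfAdjoint Q)
    (hpsd : ∀ x, 0 ≤ ⟪Q x, x⟫)
    (hQ0 : Q ≠ 0)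
    (u : EuclideanSpace ℝ (Fin n))
    (f : EuclideanSpace ℝ (Fin n) → ℝ)
    (hf : ∀ x, f x = (1/2) * ⟪Q x, x⟫ - ⟪u, x⟫)
    (xbar : EuclideanSpace ℝ (Fin n)) (δ₀ : ℝ)
    (hδ₀ : ‖Q xbar - u‖ = δ₀) (hδ₀pos : 0 < δ₀)
    (lamM : ℝ) (hlam_pos : 0 < lamM)
    (hlam_eig : Module.End.HasEigenvalue
      (Q : EuclideanSpace ℝ (Fin n) →ₗ[ℝ] EuclideanSpace ℝ (Fin n)) lamM)
    (hlam_min : ∀ μ : ℝ, 0 < μ →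
      Module.End.HasEigenvalue
        (Q : EuclideanSpace ℝ (Fin n) →ₗ[ℝ] EuclideanSpace ℝ (Fin n)) μ → lamM ≤ μ) :
    ∃ ε > 0, ∀ x, ‖x - xbar‖ ≤ ε →
      |f x - f xbar| ≤ (1 / (2 * lamM)) * ‖Q x - u‖ ^ 2 :=
  stmt_1_general Q u f hf xbar δ₀ hδ₀ hδ₀pos lamM hlam_pos
end

section
/- Let T and M_p be symmetric positive definite n×n matrices with M_p ⪰ T, and fix b ∈ ℝⁿ. Define the iteration x ↦ x + M_p⁻¹(b − Tx). Then applying this iteration n times starting from x⁰, the resulting point xⁿ satisfies xⁿ = x⁰ + M_{p,n}⁻¹(b − Tx⁰) for some symmetric positive definite matrix M_{p,n} with M_{p,n} ⪰ T. -/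
/-!
With `E = 1 - Mp⁻¹ T`, the `k`-fold iteration is `x ↦ x + N (b - T x)` for the truncated Neumann
series `N = ∑_{i<k} E^i Mp⁻¹ = (1 - E^k) T⁻¹`, so the effective preconditioner is `N⁻¹`.
For `X = Mp⁻¹` and `X = T⁻¹` one has `E X = X Eᴴ`, hence `E^(i+2) X = E (E^i X) Eᴴ`, and all
`E^i X` are positive semidefinite as soon as `X` and `E X` are; this is where `Mp ⪰ T` enters.
Thus `N ≻ 0` (its first term is `Mp⁻¹`) and `T⁻¹ - N = E^k T⁻¹ ⪰ 0`, and since inversion is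
antitone in the Loewner order, `N⁻¹ ⪰ T`.
-/

open Matrix Finset

namespace Matrix

section IterationMatrix

variable {R : Type*} [CommRing R] {n : Type*} [Fintype n] [DecidableEq n]

def iterationMatrix (P T : Matrix n n R) : Matrix n n R := 1 - P * T

variable {P T : Matrix n n R}

theorem iterate_eq_add_sum_iterationMatrix_pow_mul {b : n → R} {F : (n → R) → n → R}
    (hF : ∀ x, F x = x + P *ᵥ (b - T *ᵥ x)) (k : ℕ) (x : n → R) :
    F^[k] x = x + (∑ i ∈ range k, iterationMatrix P T ^ i * P) *ᵥ (b - T *ᵥ x) := by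
  induction k with
  | zero => simp
  | succ k ih =>
    have hsum : ∑ i ∈ range (k + 1), iterationMatrix P T ^ i * P
        = P + iterationMatrix P T * ∑ i ∈ range k, iterationMatrix P T ^ i * P := by
      simp only [sum_range_succ', pow_succ', pow_zero, one_mul, Finset.mul_sum, Matrix.mul_assoc]
      abel
    rw [Function.iterate_succ_apply', ih, hF, hsum, iterationMatrix]
    generalize ∑ i ∈ range k, iterationMatrix P T ^ i * P = N
    rw [mulVec_add, ← sub_sub, mulVec_mulVec]
    generalize b - T *ᵥ x = r
    simp only [add_mulVec, sub_mul, one_mul, sub_mulVec, mulVec_sub, ← mulVec_mulVec]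
    abel

theorem sum_iterationMatrix_pow_mul (hT : IsUnit T.det) (k : ℕ) :
    ∑ i ∈ range k, iterationMatrix P T ^ i * P = (1 - iterationMatrix P T ^ k) * T⁻¹ := by
  have hP : (1 - iterationMatrix P T) * T⁻¹ = P := by
    rw [iterationMatrix, sub_sub_cancel, Matrix.mul_assoc, mul_nonsing_inv _ hT, Matrix.mul_one]
  calc ∑ i ∈ range k, iterationMatrix P T ^ i * P
      = (∑ i ∈ range k, iterationMatrix P T ^ i) * (1 - iterationMatrix P T) * T⁻¹ := by
        simp only [Finset.sum_mul, Matrix.mul_assoc, hP]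
    _ = (1 - iterationMatrix P T ^ k) * T⁻¹ := by rw [geom_sum_mul_neg]

theorem iterationMatrix_inv_mul_inv {M : Matrix n n R} (hM : IsUnit M.det) :
    iterationMatrix M⁻¹ T * M⁻¹ = M⁻¹ * (M - T) * M⁻¹ := by
  rw [iterationMatrix, Matrix.sub_mul, Matrix.mul_sub, Matrix.sub_mul, nonsing_inv_mul _ hM,
    Matrix.one_mul, Matrix.mul_assoc]

theorem iterationMatrix_mul_inv (hT : IsUnit T.det) :
    iterationMatrix P T * T⁻¹ = T⁻¹ - P := by
  rw [iterationMatrix, Matrix.sub_mul, Matrix.one_mul, Matrix.mul_assoc, mul_nonsing_inv _ hT,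
    Matrix.mul_one]

theorem conjTranspose_iterationMatrix [StarRing R] (hP : P.IsHermitian) (hT : T.IsHermitian) :
    (iterationMatrix P T)ᴴ = 1 - T * P := by
  rw [iterationMatrix, conjTranspose_sub, conjTranspose_one, conjTranspose_mul, hT.eq, hP.eq]

end IterationMatrix

section Order

variable {K : Type*} [Field K] [PartialOrder K] [StarRing K] {n : Type*} [Fintype n]
  [DecidableEq n]

theorem PosSemidef.pow_mul_of_mul_eq_mul_conjTranspose {E X : Matrix n n K}
    (hX : X.PosSemidef) (hEX : (E * X).PosSemidef) (hcomm : E * X = X * Eᴴ) :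
    ∀ i : ℕ, (E ^ i * X).PosSemidef
  | 0 => by simpa using hX
  | 1 => by simpa using hEX
  | i + 2 => by
    have hshift : E ^ i * X * Eᴴ = E ^ (i + 1) * X := by
      rw [Matrix.mul_assoc, ← hcomm, ← Matrix.mul_assoc, pow_succ]
    rw [pow_succ', Matrix.mul_assoc, ← hshift, ← Matrix.mul_assoc]
    exact (pow_mul_of_mul_eq_mul_conjTranspose hX hEX hcomm i).mul_mul_conjTranspose_same E

variable {M T : Matrix n n K}

theorem posSemidef_iterationMatrix_pow_mul_inv_left (hM : M.PosDef) (hMT : (M - T).PosSemidef)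
    (i : ℕ) : (iterationMatrix M⁻¹ T ^ i * M⁻¹).PosSemidef := by
  have hT : T.IsHermitian := by simpa using hM.isHermitian.sub hMT.isHermitian
  refine hM.inv.posSemidef.pow_mul_of_mul_eq_mul_conjTranspose ?_ ?_ i
  · rw [iterationMatrix_inv_mul_inv ((isUnit_iff_isUnit_det M).mp hM.isUnit)]
    simpa [hM.isHermitian.inv.eq] using hMT.conjTranspose_mul_mul_same M⁻¹
  · rw [conjTranspose_iterationMatrix hM.isHermitian.inv hT, iterationMatrix]
    simp only [Matrix.sub_mul, Matrix.mul_sub, Matrix.one_mul, Matrix.mul_one, Matrix.mul_assoc]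

variable [StarOrderedRing K]

/-- Both `B - A ⪰ 0` and `A⁻¹ - B⁻¹ ⪰ 0` are Schur-complement criteria for
`[[B, 1], [1, A⁻¹]] ⪰ 0`. -/
theorem PosDef.posSemidef_inv_sub_inv {A B : Matrix n n K} (hA : A.PosDef)
    (hAB : (B - A).PosSemidef) : (A⁻¹ - B⁻¹).PosSemidef := by
  have hB : B.PosDef := by simpa using hA.add_posSemidef hAB
  let := hB.isUnit.invertible
  let := hA.inv.isUnit.invertible
  let := hA.isUnit.invertible
  have hblock := (PosDef.fromBlocks₂₂ B (1 : Matrix n n K) hA.inv).mpr (by simpa using hAB)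
  simpa using (PosDef.fromBlocks₁₁ (1 : Matrix n n K) A⁻¹ hB).mp hblock

theorem posSemidef_iterationMatrix_pow_mul_inv_right (hT : T.PosDef) (hMT : (M - T).PosSemidef)
    (i : ℕ) : (iterationMatrix M⁻¹ T ^ i * T⁻¹).PosSemidef := by
  have hM : M.IsHermitian := by simpa using hT.isHermitian.add hMT.isHermitian
  have hTdet := (isUnit_iff_isUnit_det T).mp hT.isUnit
  refine hT.inv.posSemidef.pow_mul_of_mul_eq_mul_conjTranspose ?_ ?_ i
  · rw [iterationMatrix_mul_inv hTdet]
    exact hT.posSemidef_inv_sub_inv hMT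
  · rw [conjTranspose_iterationMatrix hM.inv hT.isHermitian, iterationMatrix_mul_inv hTdet,
      Matrix.mul_sub, Matrix.mul_one, ← Matrix.mul_assoc, nonsing_inv_mul _ hTdet, Matrix.one_mul]

theorem posDef_sum_iterationMatrix_pow_mul_inv (hM : M.PosDef) (hMT : (M - T).PosSemidef)
    {k : ℕ} (hk : 0 < k) : (∑ i ∈ range k, iterationMatrix M⁻¹ T ^ i * M⁻¹).PosDef := by
  obtain ⟨j, rfl⟩ := Nat.exists_eq_add_of_lt hk
  rw [zero_add, sum_range_succ', pow_zero, Matrix.one_mul]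
  exact hM.inv.posSemidef_add (posSemidef_sum _ fun i _ =>
    posSemidef_iterationMatrix_pow_mul_inv_left hM hMT (i + 1))

theorem posSemidef_inv_sub_sum_iterationMatrix_pow_mul_inv (hT : T.PosDef)
    (hMT : (M - T).PosSemidef) (k : ℕ) :
    (T⁻¹ - ∑ i ∈ range k, iterationMatrix M⁻¹ T ^ i * M⁻¹).PosSemidef := by
  rw [sum_iterationMatrix_pow_mul ((isUnit_iff_isUnit_det T).mp hT.isUnit), Matrix.sub_mul,
    Matrix.one_mul, sub_sub_cancel]
  exact posSemidef_iterationMatrix_pow_mul_inv_right hT hMT k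

end Order

end Matrix

theorem stmt_10 {n : ℕ}
    (T Mp : Matrix (Fin n) (Fin n) ℝ)
    (hT : T.PosDef) (hMp : Mp.PosDef)
    (hfeas : (Mp - T).PosSemidef)
    (b : Fin n → ℝ)
    (F : (Fin n → ℝ) → (Fin n → ℝ))
    (hF : ∀ x, F x = x + Mp⁻¹.mulVec (b - T.mulVec x))
    (k : ℕ) (hk : 1 ≤ k) :
    ∃ Mpk : Matrix (Fin n) (Fin n) ℝ, Mpk.PosDef ∧ (Mpk - T).PosSemidef ∧
      ∀ x0 : Fin n → ℝ, F^[k] x0 = x0 + Mpk⁻¹.mulVec (b - T.mulVec x0) := by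
  set N := ∑ i ∈ range k, iterationMatrix Mp⁻¹ T ^ i * Mp⁻¹
  have hN : N.PosDef := posDef_sum_iterationMatrix_pow_mul_inv hMp hfeas hk
  have hN_le : (T⁻¹ - N).PosSemidef := posSemidef_inv_sub_sum_iterationMatrix_pow_mul_inv hT hfeas k
  have hNinv : N⁻¹⁻¹ = N := nonsing_inv_nonsing_inv N ((isUnit_iff_isUnit_det N).mp hN.isUnit)
  refine ⟨N⁻¹, hN.inv, ?_, fun x0 => ?_⟩
  · simpa [nonsing_inv_nonsing_inv T ((isUnit_iff_isUnit_det T).mp hT.isUnit)] using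
      hN.posSemidef_inv_sub_inv hN_le
  · rw [hNinv]
    exact iterate_eq_add_sum_iterationMatrix_pow_mul hF k x0
end

section
/- Let f : ℝⁿ → ℝ be convex differentiable with L-Lipschitz gradient, P₁, P₂ : ℝⁿ → ℝ convex with P = P₁ − P₂, M ⪰ L·I symmetric positive definite. Let ξᵗ ∈ ∂P₂(xᵗ), yᵗ = xᵗ + β_t(xᵗ − xᵗ⁻¹) with β_t ∈ [0,1), and let xᵗ⁺¹ minimize y ↦ ⟨∇f(yᵗ) − ξᵗ, y⟩ + (1/2)‖y − yᵗ‖²_M + P₁(y). Then f(xᵗ⁺¹) + P(xᵗ⁺¹) ≤ f(xᵗ) + P(xᵗ) + (1/2)‖xᵗ − yᵗ‖²_M − (1/2)‖xᵗ⁺¹ − xᵗ‖²_M. -/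
open scoped RealInnerProductSpace

open Set Filter Topology

/-!
The objective `Φ` of the proximal step is `P₁` plus a linear term plus `½‖· - yᵗ‖²_M`, so minimality
of `xᵗ⁺¹` improves, by convexity along the segment to `xᵗ`, to the three-point inequality
`Φ(xᵗ⁺¹) + ½‖xᵗ⁺¹ - xᵗ‖²_M ≤ Φ(xᵗ)`. Adding the descent lemma at `yᵗ` (with `L‖·‖² ≤ ‖·‖²_M`),
the gradient inequality of the convex `f` at `yᵗ`, and the subgradient inequality of `P₂` at `xᵗ`
makes all linear terms cancel.
-/

section Smooth

variable {E : Type*} [NormedAddCommGroup E] [InnerProductSpace ℝ E] [CompleteSpace E]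
  {f : E → ℝ} {g y v : E}

lemma HasGradientAt.hasDerivAt_comp_add_smul {t : ℝ} (hf : HasGradientAt f g (y + t • v)) :
    HasDerivAt (fun s : ℝ => f (y + s • v)) ⟪g, v⟫ t := by
  have hline : HasDerivAt (fun s : ℝ => y + s • v) v t := by
    simpa using ((hasDerivAt_id t).smul_const v).const_add y
  simpa [Function.comp_def] using hf.hasFDerivAt.comp_hasDerivAt t hline

lemma ConvexOn.add_inner_sub_le_of_hasGradientAt (hf : ConvexOn ℝ univ f)
    (hg : HasGradientAt f g y) (x : E) :
    f y + ⟪g, x - y⟫ ≤ f x := by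
  have hline : ConvexOn ℝ univ fun t : ℝ => f (y + t • (x - y)) := by
    simpa [Function.comp_def, AffineMap.lineMap_apply, add_comm] using
      hf.comp_affineMap (AffineMap.lineMap y x)
  have hslope := hline.le_slope_of_hasDerivAt (mem_univ 0) (mem_univ 1) zero_lt_one
    (HasGradientAt.hasDerivAt_comp_add_smul (t := 0) (by simpa using hg))
  simp only [slope_def_field, one_smul, add_sub_cancel, zero_smul, add_zero, sub_zero,
    div_one] at hslope
  linarith

lemma le_add_inner_sub_add_sq_of_lipschitz_gradient {f' : E → E} {L : ℝ}
    (hf : ∀ x, HasGradientAt f (f' x) x) (hL : ∀ z, ‖f' z - f' y‖ ≤ L * ‖z - y‖) (x : E) :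
    f x ≤ f y + ⟪f' y, x - y⟫ + L / 2 * ‖x - y‖ ^ 2 := by
  set v := x - y
  set ψ : ℝ → ℝ := fun t => f (y + t • v) - t * ⟪f' y, v⟫ - L / 2 * t ^ 2 * ‖v‖ ^ 2
  have hψ : ∀ t, HasDerivAt ψ (⟪f' (y + t • v), v⟫ - ⟪f' y, v⟫ - L * t * ‖v‖ ^ 2) t := by
    intro t
    have hsq := ((hasDerivAt_pow 2 t).const_mul (L / 2)).mul_const (‖v‖ ^ 2)
    have hlin := (hf (y + t • v)).hasDerivAt_comp_add_smul.sub
      ((hasDerivAt_id t).mul_const ⟪f' y, v⟫)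
    exact (hlin.sub hsq).congr_deriv
      (by simp only [Nat.cast_ofNat, Nat.add_one_sub_one, pow_one]; ring)
  have hψ_nonpos : ∀ t ∈ interior (Ici (0 : ℝ)),
      ⟪f' (y + t • v), v⟫ - ⟪f' y, v⟫ - L * t * ‖v‖ ^ 2 ≤ 0 := by
    intro t ht
    rw [interior_Ici, mem_Ioi] at ht
    have hdist : ‖y + t • v - y‖ = t * ‖v‖ := by
      simp only [add_sub_cancel_left, norm_smul, Real.norm_eq_abs, abs_of_pos ht]
    calc ⟪f' (y + t • v), v⟫ - ⟪f' y, v⟫ - L * t * ‖v‖ ^ 2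
        = ⟪f' (y + t • v) - f' y, v⟫ - L * t * ‖v‖ ^ 2 := by rw [inner_sub_left]
      _ ≤ ‖f' (y + t • v) - f' y‖ * ‖v‖ - L * t * ‖v‖ ^ 2 := by
          gcongr; exact real_inner_le_norm _ _
      _ ≤ L * (t * ‖v‖) * ‖v‖ - L * t * ‖v‖ ^ 2 := by
          gcongr; exact hdist ▸ hL _
      _ = 0 := by ring
  have hanti : AntitoneOn ψ (Ici 0) :=
    antitoneOn_of_hasDerivWithinAt_nonpos (convex_Ici 0)
      (fun t _ => (hψ t).continuousAt.continuousWithinAt)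
      (fun t _ => (hψ t).hasDerivWithinAt) hψ_nonpos
  have hψ₀ : ψ 0 = f y := by simp [ψ]
  have hψ₁ : ψ 1 = f x - ⟪f' y, x - y⟫ - L / 2 * ‖x - y‖ ^ 2 := by simp [ψ, v]
  linarith [hanti self_mem_Ici (mem_Ici.mpr zero_le_one) zero_le_one]

end Smooth

lemma le_of_forall_mem_Ioo_le_add_mul {a b c : ℝ} (h : ∀ t ∈ Ioo (0 : ℝ) 1, a ≤ b + t * c) :
    a ≤ b := by
  have hlim : Tendsto (fun t : ℝ => b + t * c) (𝓝[>] 0) (𝓝 b) := by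
    have hcont : Continuous fun t : ℝ => b + t * c := by fun_prop
    simpa using (hcont.tendsto 0).mono_left nhdsWithin_le_nhds
  exact ge_of_tendsto hlim (eventually_of_mem (Ioo_mem_nhdsGT zero_lt_one) h)

section Quadratic

variable {E : Type*} [NormedAddCommGroup E] [InnerProductSpace ℝ E] (M : E →L[ℝ] E)

lemma ContinuousLinearMap.inner_map_smul_add_smul_self (a b : E) (t : ℝ) :
    ⟪M ((1 - t) • a + t • b), (1 - t) • a + t • b⟫ =
      (1 - t) * ⟪M a, a⟫ + t * ⟪M b, b⟫ - t * (1 - t) * ⟪M (a - b), a - b⟫ := by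
  simp only [map_add, map_smul, map_sub, inner_add_left, inner_add_right, inner_sub_left,
    inner_sub_right, real_inner_smul_left, real_inner_smul_right]
  ring

variable {M}

lemma ConvexOn.add_half_inner_map_sub_le_of_isMinOn {ψ : E → ℝ} (hψ : ConvexOn ℝ univ ψ)
    {y u : E} (hmin : IsMinOn (fun z => ψ z + 1 / 2 * ⟪M (z - y), z - y⟫) univ u) (x : E) :
    ψ u + 1 / 2 * ⟪M (u - y), u - y⟫ + 1 / 2 * ⟪M (u - x), u - x⟫ ≤
      ψ x + 1 / 2 * ⟪M (x - y), x - y⟫ := by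
  -- Compare `u` with `(1 - t) • u + t • x`: the curvature term `-t (1 - t) ⟪M (u - x), u - x⟫`
  -- of the quadratic survives division by `t`, and `t → 0` recovers it in full.
  refine le_of_forall_mem_Ioo_le_add_mul (c := 1 / 2 * ⟪M (u - x), u - x⟫) fun t ht => ?_
  obtain ⟨ht₀, ht₁⟩ := ht
  set m := (1 - t) • u + t • x
  have hm_sub : m - y = (1 - t) • (u - y) + t • (x - y) := by module
  have hψm : ψ m ≤ (1 - t) * ψ u + t * ψ x :=
    hψ.2 (mem_univ _) (mem_univ _) (by linarith) ht₀.le (by ring)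
  have hquad := M.inner_map_smul_add_smul_self (u - y) (x - y) t
  rw [← hm_sub, sub_sub_sub_cancel_right] at hquad
  have hΦm := isMinOn_univ_iff.mp hmin m
  have hscaled : t * (ψ u + 1 / 2 * ⟪M (u - y), u - y⟫ + 1 / 2 * ⟪M (u - x), u - x⟫) ≤
      t * (ψ x + 1 / 2 * ⟪M (x - y), x - y⟫ + t * (1 / 2 * ⟪M (u - x), u - x⟫)) := by
    linarith
  exact le_of_mul_le_mul_left hscaled ht₀

end Quadratic

theorem stmt_12_general {n : ℕ}
    (M : EuclideanSpace ℝ (Fin n) →L[ℝ] EuclideanSpace ℝ (Fin n))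
    (L : ℝ)
    (hML : ∀ z, L * ‖z‖ ^ 2 ≤ ⟪M z, z⟫)
    (f : EuclideanSpace ℝ (Fin n) → ℝ)
    (f' : EuclideanSpace ℝ (Fin n) → EuclideanSpace ℝ (Fin n))
    (hfconv : ConvexOn ℝ Set.univ f)
    (hfdiff : ∀ x, HasGradientAt f (f' x) x)
    (hflip : ∀ x y, ‖f' x - f' y‖ ≤ L * ‖x - y‖)
    (P₁ P₂ P : EuclideanSpace ℝ (Fin n) → ℝ)
    (hP₁ : ConvexOn ℝ Set.univ P₁)
    (hP : ∀ x, P x = P₁ x - P₂ x)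
    (xt yt ξt xtp1 : EuclideanSpace ℝ (Fin n))
    (hξ : ∀ v, P₂ v ≥ P₂ xt + ⟪ξt, v - xt⟫)
    (hmin : ∀ z, ⟪f' yt - ξt, xtp1⟫ + (1/2) * ⟪M (xtp1 - yt), xtp1 - yt⟫ + P₁ xtp1 ≤
      ⟪f' yt - ξt, z⟫ + (1/2) * ⟪M (z - yt), z - yt⟫ + P₁ z) :
    f xtp1 + P xtp1 ≤ f xt + P xt + (1/2) * ⟪M (xt - yt), xt - yt⟫
      - (1/2) * ⟪M (xtp1 - xt), xtp1 - xt⟫ := by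
  have hψ : ConvexOn ℝ univ fun z => P₁ z + ⟪f' yt - ξt, z⟫ :=
    hP₁.add ((innerₛₗ ℝ (f' yt - ξt)).convexOn convex_univ)
  have hprox := hψ.add_half_inner_map_sub_le_of_isMinOn (M := M) (y := yt) (u := xtp1)
    (isMinOn_univ_iff.mpr fun z => by linarith [hmin z]) xt
  have hdescent := le_add_inner_sub_add_sq_of_lipschitz_gradient hfdiff (fun z => hflip z yt) xtp1
  have hsupport := hfconv.add_inner_sub_le_of_hasGradientAt (hfdiff yt) xt
  have hsubgrad := hξ xtp1
  have hLM := hML (xtp1 - yt)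
  simp only [inner_sub_left] at hprox
  simp only [inner_sub_right] at hdescent hsupport hsubgrad
  rw [hP, hP]
  linarith

theorem stmt_12 {n : ℕ}
    (M : EuclideanSpace ℝ (Fin n) →L[ℝ] EuclideanSpace ℝ (Fin n))
    (hMsym : IsSelfAdjoint M)
    (hMpd : ∀ z, z ≠ 0 → 0 < ⟪M z, z⟫)
    (L : ℝ) (hL : 0 < L)
    (hML : ∀ z, L * ‖z‖ ^ 2 ≤ ⟪M z, z⟫)
    (f : EuclideanSpace ℝ (Fin n) → ℝ)
    (f' : EuclideanSpace ℝ (Fin n) → EuclideanSpace ℝ (Fin n))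
    (hfconv : ConvexOn ℝ Set.univ f)
    (hfdiff : ∀ x, HasGradientAt f (f' x) x)
    (hflip : ∀ x y, ‖f' x - f' y‖ ≤ L * ‖x - y‖)
    (P₁ P₂ P : EuclideanSpace ℝ (Fin n) → ℝ)
    (hP₁ : ConvexOn ℝ Set.univ P₁) (hP₂ : ConvexOn ℝ Set.univ P₂)
    (hP : ∀ x, P x = P₁ x - P₂ x)
    (xt xtm1 yt ξt xtp1 : EuclideanSpace ℝ (Fin n))
    (βt : ℝ) (hβt : 0 ≤ βt) (hβt1 : βt < 1)
    (hξ : ∀ v, P₂ v ≥ P₂ xt + ⟪ξt, v - xt⟫)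
    (hy : yt = xt + βt • (xt - xtm1))
    (hmin : ∀ z, ⟪f' yt - ξt, xtp1⟫ + (1/2) * ⟪M (xtp1 - yt), xtp1 - yt⟫ + P₁ xtp1 ≤
      ⟪f' yt - ξt, z⟫ + (1/2) * ⟪M (z - yt), z - yt⟫ + P₁ z) :
    f xtp1 + P xtp1 ≤ f xt + P xt + (1/2) * ⟪M (xt - yt), xt - yt⟫
      - (1/2) * ⟪M (xtp1 - xt), xtp1 - xt⟫ :=
  stmt_12_general M L hML f f' hfconv hfdiff hflip P₁ P₂ P hP₁ hP xt yt ξt xtp1 hξ hmin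
end

section
/- Let M be symmetric positive definite with minimal eigenvalue λ_M and let x, y ∈ ℝⁿ, ξ ∈ ℝⁿ. Then for any α ∈ (1/2, 1): ‖ξ + M(x−y)‖² + 2‖M(y−x)‖² ≥ (2 − 1/α)λ_M ‖y−x‖²_M + (1−α)‖ξ‖². -/
/-!
Write `w = M (x - y)`. Young's inequality gives `2⟪ξ, w⟫ ≥ -α‖ξ‖² - α⁻¹‖w‖²`, which reduces the
claim to `(2 - 1/α) λ_M ⟪M z, z⟫ ≤ (2 - 1/α) ‖M z‖²` for `z = x - y`. Since `2 - 1/α ≥ 0` this is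
the spectral bound `λ_M ⟪M z, z⟫ ≤ ‖M z‖²`, which follows from the Rayleigh bound
`λ_M ‖z‖² ≤ ⟪M z, z⟫` via `‖M z‖² - λ_M ⟪M z, z⟫ = ‖M z - λ_M z‖² + λ_M (⟪M z, z⟫ - λ_M ‖z‖²)`.
-/

open scoped RealInnerProductSpace
open Module End

namespace LinearMap.IsSymmetric

variable {E : Type*} [NormedAddCommGroup E] [InnerProductSpace ℝ E] [FiniteDimensional ℝ E]
  {T : E →ₗ[ℝ] E} {c : ℝ}

theorem mul_norm_sq_le_inner_map_self (hT : T.IsSymmetric)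
    (hc : ∀ μ, HasEigenvalue T μ → c ≤ μ) (z : E) : c * ‖z‖ ^ 2 ≤ ⟪T z, z⟫ := by
  rcases eq_or_ne z 0 with rfl | hz
  · simp
  have : Nontrivial E := ⟨z, 0, hz⟩
  have hbdd : BddBelow (Set.range fun w : { w : E // w ≠ 0 } => ⟪T w, w⟫ / ‖(w : E)‖ ^ 2) := by
    refine ⟨-‖LinearMap.toContinuousLinearMap T‖, ?_⟩
    rintro _ ⟨w, rfl⟩
    exact neg_le_of_abs_le ((LinearMap.toContinuousLinearMap T).rayleighQuotient_le_norm w)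
  -- the infimum of the Rayleigh quotient is itself an eigenvalue
  have hcz : c ≤ ⟪T z, z⟫ / ‖z‖ ^ 2 :=
    (hc _ hT.hasEigenvalue_iInf_of_finiteDimensional).trans (ciInf_le hbdd ⟨z, hz⟩)
  rwa [le_div_iff₀ (by positivity)] at hcz

theorem mul_inner_map_self_le_norm_sq (hT : T.IsSymmetric) (hc₀ : 0 ≤ c)
    (hc : ∀ μ, HasEigenvalue T μ → c ≤ μ) (z : E) : c * ⟪T z, z⟫ ≤ ‖T z‖ ^ 2 := by
  have hgap := hT.mul_norm_sq_le_inner_map_self hc z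
  have hshift : ‖T z - c • z‖ ^ 2 = ‖T z‖ ^ 2 - 2 * c * ⟪T z, z⟫ + c ^ 2 * ‖z‖ ^ 2 := by
    rw [norm_sub_sq_real, inner_smul_right, norm_smul, mul_pow, Real.norm_eq_abs, sq_abs]; ring
  nlinarith [sq_nonneg ‖T z - c • z‖, mul_le_mul_of_nonneg_left hgap hc₀]

end LinearMap.IsSymmetric

theorem neg_mul_norm_sq_sub_inv_mul_norm_sq_le_two_mul_inner {F : Type*} [NormedAddCommGroup F]
    [InnerProductSpace ℝ F] {α : ℝ} (hα : 0 < α) (u v : F) :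
    -(α * ‖u‖ ^ 2) - α⁻¹ * ‖v‖ ^ 2 ≤ 2 * ⟪u, v⟫ := by
  have h : α * ‖u + α⁻¹ • v‖ ^ 2 = α * ‖u‖ ^ 2 + 2 * ⟪u, v⟫ + α⁻¹ * ‖v‖ ^ 2 := by
    rw [norm_add_sq_real, inner_smul_right, norm_smul, mul_pow, Real.norm_eq_abs, sq_abs]
    field_simp
  nlinarith [mul_nonneg hα.le (sq_nonneg ‖u + α⁻¹ • v‖)]

theorem stmt_16_general {n : ℕ}
    (M : EuclideanSpace ℝ (Fin n) →L[ℝ] EuclideanSpace ℝ (Fin n))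
    (hMsym : IsSelfAdjoint M)
    (lamM : ℝ) (hlam_pos : 0 < lamM)
    (hlam_min : ∀ μ : ℝ,
      Module.End.HasEigenvalue
        (M : EuclideanSpace ℝ (Fin n) →ₗ[ℝ] EuclideanSpace ℝ (Fin n)) μ → lamM ≤ μ)
    (x y ξ : EuclideanSpace ℝ (Fin n))
    (α : ℝ) (hα₁ : 1/2 < α) :
    ‖ξ + M (x - y)‖ ^ 2 + 2 * ‖M (y - x)‖ ^ 2 ≥
      (2 - 1/α) * lamM * ⟪M (y - x), y - x⟫ + (1 - α) * ‖ξ‖ ^ 2 := by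
  set w := M (x - y)
  have hyx : M (y - x) = -w := by rw [← map_neg, neg_sub]
  have hspec : lamM * ⟪w, x - y⟫ ≤ ‖w‖ ^ 2 :=
    hMsym.isSymmetric.mul_inner_map_self_le_norm_sq hlam_pos.le hlam_min (x - y)
  have hyoung := neg_mul_norm_sq_sub_inv_mul_norm_sq_le_two_mul_inner
    (by linarith : (0 : ℝ) < α) ξ w
  have hcoef : 0 ≤ 2 - 1 / α := by
    rw [sub_nonneg, div_le_iff₀ (by linarith)]; linarith
  rw [hyx, norm_neg, ← neg_sub x y, inner_neg_neg, norm_add_sq_real]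
  linear_combination hyoung + mul_le_mul_of_nonneg_left hspec hcoef + sq_nonneg ‖w‖

theorem stmt_16 {n : ℕ}
    (M : EuclideanSpace ℝ (Fin n) →L[ℝ] EuclideanSpace ℝ (Fin n))
    (hMsym : IsSelfAdjoint M)
    (hMpd : ∀ z, z ≠ 0 → 0 < ⟪M z, z⟫)
    (lamM : ℝ) (hlam_pos : 0 < lamM)
    (hlam_eig : Module.End.HasEigenvalue
      (M : EuclideanSpace ℝ (Fin n) →ₗ[ℝ] EuclideanSpace ℝ (Fin n)) lamM)
    (hlam_min : ∀ μ : ℝ,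
      Module.End.HasEigenvalue
        (M : EuclideanSpace ℝ (Fin n) →ₗ[ℝ] EuclideanSpace ℝ (Fin n)) μ → lamM ≤ μ)
    (x y ξ : EuclideanSpace ℝ (Fin n))
    (α : ℝ) (hα₁ : 1/2 < α) (hα₂ : α < 1) :
    ‖ξ + M (x - y)‖ ^ 2 + 2 * ‖M (y - x)‖ ^ 2 ≥
      (2 - 1/α) * lamM * ⟪M (y - x), y - x⟫ + (1 - α) * ‖ξ‖ ^ 2 :=
  stmt_16_general M hMsym lamM hlam_pos hlam_min x y ξ α hα₁
end
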